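/- Let F be an algebraically closed field of characteristic 3 and let L = Br_8 be the 8-dimensional Brown algebra over F defined by the explicit bracket table below. Then L is a simple Lie algebra with trivial center. -/

import Mathlib

noncomputable section

/-- The (0-indexed) pairs `(i,j)` for which the bracket `[x_{i+1}, x_{j+1}]` of basis
vectors of the Brown algebra `Br₈` is listed as nonzero; all brackets of basis vectors
not obtained from these by antisymmetry vanish. -/
def br8Pairs : List (ℕ × ℕ) :=
  [(0, 1), (0, 3), (0, 4), (0, 6), (1, 2), (1, 4), (1, 5), (1, 6), (1, 7), (2, 3),
    (2, 5), (2, 6), (3, 4), (3, 6), (4, 5), (4, 6), (4, 7), (5, 6)]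

/-!
The element `h = x 6` acts diagonally on `Br₈`, with eigenvalue `-1` on `x 0, x 3, x 4`,
`1` on `x 1, x 2, x 5` and `0` on `x 6, x 7`. Since `2 ≠ 0` in characteristic 3, the three
eigencomponents of an element of an ideal `I` lie in `I` again, and bracketing a nonzero
eigencomponent with suitable basis vectors produces `h`. Finally `⁅h, x i⁆ = ±x i` for `i ≤ 5`
and `x 7 = ⁅x 1, x 4⁆`, so an ideal containing `h` is everything.
-/

namespace LieSubmodule

variable {F L M : Type*} [Field F] [LieRing L] [AddCommGroup M] [Module F M] [LieRingModule L M]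

theorem eq_top_of_basis_mem {ι : Type*} {N : LieSubmodule F L M} (b : Module.Basis ι F M)
    (hb : ∀ i, b i ∈ N) : N = ⊤ :=
  (toSubmodule_eq_top N).1 <| eq_top_iff.2 <|
    b.span_eq ▸ Submodule.span_le.2 (Set.range_subset_iff.2 hb)

theorem mem_of_add_add_mem_of_lie_eq_neg_zero_self {N : LieSubmodule F L M} (h2 : (2 : F) ≠ 0)
    {h : L} {u v w : M} (hu : ⁅h, u⁆ = -u) (hv : ⁅h, v⁆ = 0) (hw : ⁅h, w⁆ = w)
    (hN : u + v + w ∈ N) : u ∈ N ∧ v ∈ N ∧ w ∈ N := by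
  have hsub : -u + w ∈ N := by
    have := N.lie_mem (x := h) hN
    rwa [lie_add, lie_add, hu, hv, hw, add_zero] at this
  have hadd : u + w ∈ N := by
    have := N.lie_mem (x := h) hsub
    rwa [lie_add, lie_neg, hu, hw, neg_neg] at this
  have hu' : u ∈ N := by
    refine ((N : Submodule F M).smul_mem_iff h2).1 ?_
    convert N.sub_mem hadd hsub using 1
    rw [two_smul]; abel
  have hw' : w ∈ N := by
    refine ((N : Submodule F M).smul_mem_iff h2).1 ?_
    convert N.add_mem hsub hadd using 1
    rw [two_smul]; abel
  refine ⟨hu', ?_, hw'⟩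
  have hv' := N.sub_mem (N.sub_mem hN hu') hw'
  rwa [show u + v + w - u - w = v by abel] at hv'

end LieSubmodule

theorem two_eq_neg_one_of_charP_three {F : Type*} [Field F] [CharP F 3] : (2 : F) = -1 := by
  have h3 : (3 : F) = 0 := by exact_mod_cast CharP.cast_eq_zero F 3
  linear_combination h3

section Br8

variable {F L : Type*} [Field F] [LieRing L] [LieAlgebra F L]

/-- Part of the bracket table of `Br₈`, with `2 = -1` (characteristic 3). -/
structure Br8Brackets (x : Fin 8 → L) : Prop where
  x6_x0 : ⁅x 6, x 0⁆ = -x 0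
  x6_x1 : ⁅x 6, x 1⁆ = x 1
  x6_x2 : ⁅x 6, x 2⁆ = x 2
  x6_x3 : ⁅x 6, x 3⁆ = -x 3
  x6_x4 : ⁅x 6, x 4⁆ = -x 4
  x6_x5 : ⁅x 6, x 5⁆ = x 5
  x6_x7 : ⁅x 6, x 7⁆ = 0
  x0_x1 : ⁅x 0, x 1⁆ = x 6
  x0_x2 : ⁅x 0, x 2⁆ = 0
  x0_x5 : ⁅x 0, x 5⁆ = 0
  x1_x4 : ⁅x 1, x 4⁆ = x 7
  x2_x5 : ⁅x 2, x 5⁆ = x 0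
  x3_x2 : ⁅x 3, x 2⁆ = x 6
  x3_x5 : ⁅x 3, x 5⁆ = 0
  x4_x5 : ⁅x 4, x 5⁆ = x 6
  x7_x1 : ⁅x 7, x 1⁆ = x 5

namespace Br8Brackets

variable {x : Fin 8 → L} {I : LieIdeal F L}

theorem x6_mem_of_x0_mem (hx : Br8Brackets x) (h0 : x 0 ∈ I) : x 6 ∈ I :=
  hx.x0_x1 ▸ lie_mem_left F L I _ _ h0

theorem x6_mem_of_pos_mem (hx : Br8Brackets x) {a b c : F}
    (hv : a • x 1 + b • x 2 + c • x 5 ∈ I) (hne : a ≠ 0 ∨ b ≠ 0 ∨ c ≠ 0) : x 6 ∈ I := by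
  obtain rfl | ha := eq_or_ne a 0
  · obtain rfl | hb := eq_or_ne b 0
    · have hc : c ≠ 0 := by simpa using hne
      have h5 : x 5 ∈ I := ((I : Submodule F L).smul_mem_iff hc).1 (by simpa using hv)
      exact hx.x6_mem_of_x0_mem (hx.x2_x5 ▸ lie_mem_right F L I (x 2) _ h5)
    · refine ((I : Submodule F L).smul_mem_iff hb).1 ?_
      simpa [hx.x3_x2, hx.x3_x5] using lie_mem_right F L I (x 3) _ hv
  · refine ((I : Submodule F L).smul_mem_iff ha).1 ?_
    simpa [hx.x0_x1, hx.x0_x2, hx.x0_x5] using lie_mem_right F L I (x 0) _ hv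

theorem x6_mem_of_neg_mem (hx : Br8Brackets x) {a b c : F}
    (hw : a • x 0 + b • x 3 + c • x 4 ∈ I) (hne : a ≠ 0 ∨ b ≠ 0 ∨ c ≠ 0) : x 6 ∈ I := by
  obtain rfl | hc := eq_or_ne c 0
  · obtain rfl | hb := eq_or_ne b 0
    · have ha : a ≠ 0 := by simpa using hne
      exact hx.x6_mem_of_x0_mem (((I : Submodule F L).smul_mem_iff ha).1 (by simpa using hw))
    · refine ((I : Submodule F L).smul_mem_iff hb).1 ?_
      simpa [hx.x0_x2, hx.x3_x2] using lie_mem_left F L I _ (x 2) hw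
  · refine ((I : Submodule F L).smul_mem_iff hc).1 ?_
    simpa [hx.x0_x5, hx.x3_x5, hx.x4_x5] using lie_mem_left F L I _ (x 5) hw

theorem x6_mem_of_zero_mem (hx : Br8Brackets x) {a b : F}
    (hz : a • x 6 + b • x 7 ∈ I) (hne : a ≠ 0 ∨ b ≠ 0) : x 6 ∈ I := by
  refine hx.x6_mem_of_pos_mem (a := a) (b := 0) (c := b) ?_ (by tauto)
  simpa [hx.x6_x1, hx.x7_x1] using lie_mem_left F L I _ (x 1) hz

variable {b : Module.Basis (Fin 8) F L}

theorem eq_top_of_x6_mem (hx : Br8Brackets ⇑b) (h6 : b 6 ∈ I) : I = ⊤ := by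
  have hlie : ∀ j, ⁅b 6, b j⁆ ∈ I := fun j => lie_mem_left F L I _ _ h6
  have h4 : b 4 ∈ I := by simpa [hx.x6_x4] using hlie 4
  refine LieSubmodule.eq_top_of_basis_mem b fun i => ?_
  fin_cases i
  · simpa [hx.x6_x0] using hlie 0
  · simpa [hx.x6_x1] using hlie 1
  · simpa [hx.x6_x2] using hlie 2
  · simpa [hx.x6_x3] using hlie 3
  · exact h4
  · simpa [hx.x6_x5] using hlie 5
  · exact h6
  · exact hx.x1_x4 ▸ lie_mem_right F L I (b 1) _ h4

theorem x6_mem_of_ne_bot (hx : Br8Brackets ⇑b) (h2 : (2 : F) ≠ 0) (hI : I ≠ ⊥) : b 6 ∈ I := by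
  obtain ⟨y, hyI, hy0⟩ : ∃ y ∈ I, y ≠ 0 := by
    by_contra! h
    exact hI ((LieSubmodule.eq_bot_iff I).2 h)
  set c := b.repr y
  have hy : y = (c 0 • b 0 + c 3 • b 3 + c 4 • b 4) + (c 6 • b 6 + c 7 • b 7)
      + (c 1 • b 1 + c 2 • b 2 + c 5 • b 5) := by
    conv_lhs => rw [← b.sum_repr y]
    rw [Fin.sum_univ_eight]
    abel
  obtain ⟨hneg, hzero, hpos⟩ := LieSubmodule.mem_of_add_add_mem_of_lie_eq_neg_zero_self h2
    (h := b 6) (by simp [hx.x6_x0, hx.x6_x3, hx.x6_x4, add_comm])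
    (by simp [hx.x6_x7]) (by simp [hx.x6_x1, hx.x6_x2, hx.x6_x5]) (hy ▸ hyI)
  obtain ⟨i, hi⟩ : ∃ i, c i ≠ 0 := by
    by_contra! hc
    exact hy0 (b.repr.map_eq_zero_iff.1 (Finsupp.ext hc))
  fin_cases i
  exacts [hx.x6_mem_of_neg_mem hneg (.inl hi), hx.x6_mem_of_pos_mem hpos (.inl hi),
    hx.x6_mem_of_pos_mem hpos (.inr (.inl hi)), hx.x6_mem_of_neg_mem hneg (.inr (.inl hi)),
    hx.x6_mem_of_neg_mem hneg (.inr (.inr hi)), hx.x6_mem_of_pos_mem hpos (.inr (.inr hi)),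
    hx.x6_mem_of_zero_mem hzero (.inl hi), hx.x6_mem_of_zero_mem hzero (.inr hi)]

theorem not_isLieAbelian (hx : Br8Brackets ⇑b) : ¬IsLieAbelian L := fun _ =>
  b.ne_zero 6 (hx.x0_x1 ▸ trivial_lie_zero L L (b 0) (b 1))

theorem isSimple (hx : Br8Brackets ⇑b) (h2 : (2 : F) ≠ 0) : LieAlgebra.IsSimple F L :=
  ⟨fun _ => or_iff_not_imp_left.2 fun hI => hx.eq_top_of_x6_mem (hx.x6_mem_of_ne_bot h2 hI),
    hx.not_isLieAbelian⟩

end Br8Brackets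

theorem Br8Brackets.of_table [CharP F 3] {x : Fin 8 → L}
    (h12 : ⁅x 0, x 1⁆ = x 6) (h17 : ⁅x 0, x 6⁆ = x 0) (h25 : ⁅x 1, x 4⁆ = x 7)
    (h27 : ⁅x 1, x 6⁆ = (2 : F) • x 1) (h28 : ⁅x 1, x 7⁆ = (2 : F) • x 5)
    (h34 : ⁅x 2, x 3⁆ = (2 : F) • x 6) (h36 : ⁅x 2, x 5⁆ = x 0)
    (h37 : ⁅x 2, x 6⁆ = (2 : F) • x 2) (h47 : ⁅x 3, x 6⁆ = x 3) (h56 : ⁅x 4, x 5⁆ = x 6)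
    (h57 : ⁅x 4, x 6⁆ = x 4) (h67 : ⁅x 5, x 6⁆ = (2 : F) • x 5)
    (hzero : ∀ i j : Fin 8, ((i : ℕ), (j : ℕ)) ∉ br8Pairs →
      ((j : ℕ), (i : ℕ)) ∉ br8Pairs → ⁅x i, x j⁆ = 0) :
    Br8Brackets x := by
  simp only [two_eq_neg_one_of_charP_three, neg_one_smul] at h27 h28 h34 h37 h67
  have skew {a b c : L} (h : ⁅a, b⁆ = c) : ⁅b, a⁆ = -c := by rw [← lie_skew, h]
  exact
    { x6_x0 := skew h17
      x6_x1 := by simpa using skew h27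
      x6_x2 := by simpa using skew h37
      x6_x3 := skew h47
      x6_x4 := skew h57
      x6_x5 := by simpa using skew h67
      x6_x7 := hzero 6 7 (by decide) (by decide)
      x0_x1 := h12
      x0_x2 := hzero 0 2 (by decide) (by decide)
      x0_x5 := hzero 0 5 (by decide) (by decide)
      x1_x4 := h25
      x2_x5 := h36
      x3_x2 := by simpa using skew h34
      x3_x5 := hzero 3 5 (by decide) (by decide)
      x4_x5 := h56
      x7_x1 := by simpa using skew h28 }

end Br8

theorem br8_isSimple_and_center_eq_bot_general
    (F : Type*) [Field F] [CharP F 3]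
    (L : Type*) [LieRing L] [LieAlgebra F L]
    (x : Fin 8 → L)
    (bL : Module.Basis (Fin 8) F L) (hbL : ∀ i, bL i = x i)
    (h12 : ⁅x 0, x 1⁆ = x 6)
    (h17 : ⁅x 0, x 6⁆ = x 0)
    (h25 : ⁅x 1, x 4⁆ = x 7)
    (h27 : ⁅x 1, x 6⁆ = (2 : F) • x 1)
    (h28 : ⁅x 1, x 7⁆ = (2 : F) • x 5)
    (h34 : ⁅x 2, x 3⁆ = (2 : F) • x 6)
    (h36 : ⁅x 2, x 5⁆ = x 0)
    (h37 : ⁅x 2, x 6⁆ = (2 : F) • x 2)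
    (h47 : ⁅x 3, x 6⁆ = x 3)
    (h56 : ⁅x 4, x 5⁆ = x 6)
    (h57 : ⁅x 4, x 6⁆ = x 4)
    (h67 : ⁅x 5, x 6⁆ = (2 : F) • x 5)
    (hzero : ∀ i j : Fin 8, ((i : ℕ), (j : ℕ)) ∉ br8Pairs →
      ((j : ℕ), (i : ℕ)) ∉ br8Pairs → ⁅x i, x j⁆ = 0)
    : LieAlgebra.IsSimple F L ∧ LieAlgebra.center F L = ⊥ := by
  have hx : Br8Brackets x :=
    .of_table h12 h17 h25 h27 h28 h34 h36 h37 h47 h56 h57 h67 hzero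
  obtain rfl : ⇑bL = x := funext hbL
  have h2 : (2 : F) ≠ 0 := by
    rw [two_eq_neg_one_of_charP_three]
    exact neg_ne_zero.2 one_ne_zero
  have := hx.isSimple h2
  exact ⟨this, LieAlgebra.center_eq_bot F L⟩

/-- The 8-dimensional Brown algebra `Br₈` over an algebraically closed field of
characteristic `3` (presented by its basis `x₁, …, x₈` and the explicit bracket table)
is a simple Lie algebra with trivial center. -/
theorem br8_isSimple_and_center_eq_bot
    (F : Type*) [Field F] [IsAlgClosed F] [CharP F 3]
    (L : Type*) [LieRing L] [LieAlgebra F L]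
    (x : Fin 8 → L)
    (bL : Module.Basis (Fin 8) F L) (hbL : ∀ i, bL i = x i)
    (h12 : ⁅x 0, x 1⁆ = x 6)
    (h14 : ⁅x 0, x 3⁆ = (2 : F) • x 5)
    (h15 : ⁅x 0, x 4⁆ = x 2)
    (h17 : ⁅x 0, x 6⁆ = x 0)
    (h23 : ⁅x 1, x 2⁆ = x 4)
    (h25 : ⁅x 1, x 4⁆ = x 7)
    (h26 : ⁅x 1, x 5⁆ = (2 : F) • x 3)
    (h27 : ⁅x 1, x 6⁆ = (2 : F) • x 1)
    (h28 : ⁅x 1, x 7⁆ = (2 : F) • x 5)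
    (h34 : ⁅x 2, x 3⁆ = (2 : F) • x 6)
    (h36 : ⁅x 2, x 5⁆ = x 0)
    (h37 : ⁅x 2, x 6⁆ = (2 : F) • x 2)
    (h45 : ⁅x 3, x 4⁆ = (2 : F) • x 1)
    (h47 : ⁅x 3, x 6⁆ = x 3)
    (h56 : ⁅x 4, x 5⁆ = x 6)
    (h57 : ⁅x 4, x 6⁆ = x 4)
    (h58 : ⁅x 4, x 7⁆ = x 0)
    (h67 : ⁅x 5, x 6⁆ = (2 : F) • x 5)
    (hzero : ∀ i j : Fin 8, ((i : ℕ), (j : ℕ)) ∉ br8Pairs →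
      ((j : ℕ), (i : ℕ)) ∉ br8Pairs → ⁅x i, x j⁆ = 0)
    : LieAlgebra.IsSimple F L ∧ LieAlgebra.center F L = ⊥ :=
  br8_isSimple_and_center_eq_bot_general F L x bL hbL h12 h17 h25 h27 h28 h34 h36 h37 h47 h56 h57
    h67 hzero
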